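/- arXiv:math/0606102 — 2 statements merged into one kernel-verified Lean document; each statement's English description precedes it below -/
import Mathlib

section
/- For every p ≥ 1 the cochain c_p is an inhomogeneous p-cocycle of P_n with values in the trivial representation Λ^p H_ℚ (its inhomogeneous coboundary vanishes), and for every partition λ of q with positive parts the cochain c_λ is an inhomogeneous q-cocycle of P_n with values in Λ^q H_ℚ. -/
noncomputable section
open scoped TensorProduct


/-- `H = Fin n →₀ ℤ`, the first integral homology of the free group. -/
abbrev Hz (n : ℕ) : Type := Fin n →₀ ℤ

/-- The standard basis vector `X i`. -/
def Xz (n : ℕ) (i : Fin n) : Hz n := Finsupp.single i 1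

/-- `H ⊗ℤ H`. -/
abbrev HHz (n : ℕ) : Type := Hz n ⊗[ℤ] Hz n

/-- The degree ≤ 2 truncation of the Magnus algebra: underlying set `H × (H ⊗ H)`,
with multiplication `(u,s)·(u',s') = (u+u', s+s'+u⊗u')`. -/
def Mn (n : ℕ) : Type := Hz n × HHz n

namespace Mn

variable {n : ℕ}

instance : Group (Mn n) where
  mul a b := (a.1 + b.1, a.2 + b.2 + a.1 ⊗ₜ[ℤ] b.1)
  one := ((0 : Hz n), (0 : HHz n))
  inv a := (-a.1, -a.2 + a.1 ⊗ₜ[ℤ] a.1)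
  mul_assoc a b c := by
    show (_, _) = (_, _)
    refine Prod.ext (add_assoc _ _ _) ?_
    show a.2 + b.2 + a.1 ⊗ₜ[ℤ] b.1 + c.2 + (a.1 + b.1) ⊗ₜ[ℤ] c.1
        = a.2 + (b.2 + c.2 + b.1 ⊗ₜ[ℤ] c.1) + a.1 ⊗ₜ[ℤ] (b.1 + c.1)
    rw [TensorProduct.add_tmul, TensorProduct.tmul_add]
    abel
  one_mul a := by
    show ((0 : Hz n) + a.1, (0 : HHz n) + a.2 + (0 : Hz n) ⊗ₜ[ℤ] a.1) = a
    rw [TensorProduct.zero_tmul]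
    simp
    rfl
  mul_one a := by
    show (a.1 + 0, a.2 + (0:HHz n) + a.1 ⊗ₜ[ℤ] (0 : Hz n)) = a
    rw [TensorProduct.tmul_zero]
    simp
    rfl
  inv_mul_cancel a := by
    show (-a.1 + a.1, (-a.2 + a.1 ⊗ₜ[ℤ] a.1) + a.2 + (-a.1) ⊗ₜ[ℤ] a.1) = ((0:Hz n), (0:HHz n))
    rw [TensorProduct.neg_tmul]
    refine Prod.ext (by simp) ?_
    show _ = (0 : HHz n)
    abel

end Mn

/-- The truncated standard Magnus expansion `Θ : F_n →* M_n`, `x_i ↦ (X_i, 0)`. -/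
def Theta (n : ℕ) : FreeGroup (Fin n) →* Mn n :=
  FreeGroup.lift fun i => ((Xz n i, 0) : Mn n)

/-- The abelianization map `a : F_n → H`, the first component of `Θ`. -/
def aMap (n : ℕ) (γ : FreeGroup (Fin n)) : Hz n := (Theta n γ).1

/-- `θ₂`, the second component of the truncated Magnus expansion. -/
def theta2 (n : ℕ) (γ : FreeGroup (Fin n)) : HHz n := (Theta n γ).2


/-- The braid relations on `m` generators `σ_0, …, σ_{m-1}` (0-based):
`σ i` and `σ j` commute for `i + 2 ≤ j`, and `σ i σ (i+1) σ i = σ (i+1) σ i σ (i+1)`. -/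
def braidRels (m : ℕ) : Set (FreeGroup (Fin m)) :=
  {r | (∃ i j : Fin m, (i : ℕ) + 2 ≤ (j : ℕ) ∧
          r = .of i * .of j * (.of i)⁻¹ * (.of j)⁻¹) ∨
       (∃ i j : Fin m, (i : ℕ) + 1 = (j : ℕ) ∧
          r = .of i * .of j * .of i * (.of j * .of i * .of j)⁻¹)}

/-- The braid group on `m+1` strings, presented with `m` generators. `B_n = Braid (n-1)`. -/
abbrev Braid (m : ℕ) : Type := PresentedGroup (braidRels m)

/-- The generator `σ_i` (0-based) of the braid group. -/
def sigma {m : ℕ} (i : Fin m) : Braid m := PresentedGroup.of i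

/-- The generator `σ_k` of the braid group indexed by a natural number `k`
(defined to be `1` out of range). -/
def sg (m : ℕ) (k : ℕ) : Braid m :=
  if h : k < m then sigma ⟨k, h⟩ else 1

/-- The pure braid generator `A_{i,j}` (`0`-based indices `i < j`):
`Ael m i j = σ_{j-1} ⋯ σ_{i+1} σ_i² σ_{i+1}⁻¹ ⋯ σ_{j-1}⁻¹` in `Braid m`. -/
def Ael (m : ℕ) (i : ℕ) : ℕ → Braid m
  | 0 => 1
  | (j + 1) =>
    if j = i then sg m i * sg m i
    else sg m j * Ael m i j * (sg m j)⁻¹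

abbrev V (n : ℕ) : Type := Fin n → ℚ
def toV (n : ℕ) : Hz n →+ V n :=
  AddMonoidHom.mk' (fun h i => ((h i : ℤ) : ℚ))
    (fun a b => by funext i; simp [Finsupp.add_apply])
def toQ2 (n : ℕ) : (Hz n ⊗[ℤ] Hz n) →+ (V n ⊗[ℚ] V n) :=
  TensorProduct.liftAddHom
    (AddMonoidHom.mk'
      (fun a => AddMonoidHom.mk' (fun b => toV n a ⊗ₜ[ℚ] toV n b)
        (fun b b' => by
          show toV n a ⊗ₜ[ℚ] toV n (b + b') = _
          rw [map_add, TensorProduct.tmul_add]))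
      (fun a a' => by
        apply AddMonoidHom.ext
        intro b
        show (toV n (a + a')) ⊗ₜ[ℚ] (toV n b) =
          (toV n a) ⊗ₜ[ℚ] (toV n b) + (toV n a') ⊗ₜ[ℚ] (toV n b)
        rw [map_add, TensorProduct.add_tmul]))
    (fun z a b => by
      show (toV n (z • a)) ⊗ₜ[ℚ] (toV n b) = (toV n a) ⊗ₜ[ℚ] (toV n (z • b))
      rw [map_zsmul, map_zsmul, TensorProduct.smul_tmul])

/-- The `ℚ`-linear extension `H_ℚ → H_ℚ ⊗ H_ℚ` of an additive map `H → H ⊗ H`. -/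
def tauQ (n : ℕ) (t : Hz n →+ HHz n) : V n →ₗ[ℚ] (V n ⊗[ℚ] V n) :=
  (Pi.basisFun ℚ (Fin n)).constr ℚ (fun i => toQ2 n (t (Xz n i)))

def ecast (n : ℕ) {a b : ℕ} (h : a = b) : ⋀[ℚ]^a (V n) →ₗ[ℚ] ⋀[ℚ]^b (V n) :=
  Submodule.inclusion (by rw [h])
def oneE (n : ℕ) : ⋀[ℚ]^0 (V n) :=
  ⟨1, by
    show (1 : ExteriorAlgebra ℚ (V n)) ∈
      LinearMap.range (ExteriorAlgebra.ι ℚ (M := V n)) ^ 0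
    rw [pow_zero]
    exact Submodule.one_le.1 le_rfl⟩
def iota1 (n : ℕ) : V n →ₗ[ℚ] ⋀[ℚ]^1 (V n) :=
  LinearMap.codRestrict _ (ExteriorAlgebra.ι ℚ)
    (fun v => by
      show ExteriorAlgebra.ι ℚ v ∈
        LinearMap.range (ExteriorAlgebra.ι ℚ (M := V n)) ^ 1
      rw [pow_one]; exact ⟨v, rfl⟩)
def wedgeMap (n : ℕ) (a b : ℕ) :
    ⋀[ℚ]^a (V n) →ₗ[ℚ] ⋀[ℚ]^b (V n) →ₗ[ℚ] ⋀[ℚ]^(a+b) (V n) :=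
  LinearMap.mk₂ ℚ
    (fun x y => ⟨x.1 * y.1, by
      show (x.1 * y.1 : ExteriorAlgebra ℚ (V n)) ∈
        LinearMap.range (ExteriorAlgebra.ι ℚ (M := V n)) ^ (a + b)
      rw [pow_add]
      exact Submodule.mul_mem_mul x.2 y.2⟩)
    (fun x x' y => Subtype.ext (by simp [add_mul]))
    (fun c x y => Subtype.ext (by simp [smul_mul_assoc]))
    (fun x y y' => Subtype.ext (by simp [mul_add]))
    (fun c x y => Subtype.ext (by simp [mul_smul_comm]))
def Tp (n : ℕ) : ℕ → ModuleCat.{0} ℚ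
  | 0 => ModuleCat.of ℚ ℚ
  | (m+1) => ModuleCat.of ℚ (V n ⊗[ℚ] (Tp n m))
def pip (n : ℕ) : (p : ℕ) → ((Tp n p : Type) →ₗ[ℚ] ⋀[ℚ]^p (V n))
  | 0 => LinearMap.toSpanSingleton ℚ _ (oneE n)
  | (p+1) =>
    TensorProduct.lift
      ((((wedgeMap n 1 p).comp (iota1 n)).compl₂ (pip n p)).compr₂
        (ecast n (Nat.add_comm 1 p)))
def expandLeft (n m : ℕ) (u : V n →ₗ[ℚ] V n ⊗[ℚ] V n) :
    (Tp n (m+1) : Type) →ₗ[ℚ] (Tp n (m+2) : Type) :=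
  (TensorProduct.assoc ℚ (V n) (V n) (Tp n m)).toLinearMap ∘ₗ (LinearMap.rTensor (Tp n m) u)
def Bfun (n : ℕ) : (p : ℕ) → (Fin p → (V n →ₗ[ℚ] V n ⊗[ℚ] V n)) →
    (V n →ₗ[ℚ] (Tp n (p+1) : Type))
  | 0, _ => (TensorProduct.rid ℚ (V n)).symm.toLinearMap
  | (p+1), u => (expandLeft n p (u 0)) ∘ₗ Bfun n p (fun k => u k.succ)
def eQ (n : ℕ) (i : Fin n) : V n := Pi.single i 1
def rp (n : ℕ) (p : ℕ) (u : V n →ₗ[ℚ] (Tp n (p+1) : Type)) : (Tp n p : Type) :=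
  ∑ i : Fin n, (TensorProduct.lid ℚ (Tp n p))
    ((LinearMap.rTensor (Tp n p) (LinearMap.proj i : V n →ₗ[ℚ] ℚ)) (u (eQ n i)))

section Cochains

variable {G : Type} [Group G] (n : ℕ)

/-- `c_p(g₁,…,g_p) = π_p(r_p(b_p(t(g₁) ⊗ ⋯ ⊗ t(g_p))))`. -/
def cpGen (t : G → (V n →ₗ[ℚ] V n ⊗[ℚ] V n)) (p : ℕ) (g : Fin p → G) :
    ⋀[ℚ]^p (V n) :=
  pip n p (rp n p (Bfun n p (fun k => t (g k))))

/-- The cochain `c_λ`: wedge of the `c_{λ_k}` on consecutive blocks. -/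
def cList (t : G → (V n →ₗ[ℚ] V n ⊗[ℚ] V n)) :
    (l : List ℕ) → (Fin l.sum → G) → ⋀[ℚ]^(l.sum) (V n)
  | [] => fun _ => ecast n (by simp) (oneE n)
  | a :: l => fun g =>
    ecast n (by simp)
      (wedgeMap n a l.sum
        (cpGen n t a (fun i => g ⟨i.1, by
          have h2 : (a :: l).sum = a + l.sum := by simp
          omega⟩))
        (cList t l (fun i => g ⟨a + i.1, by
          have h1 := i.2
          have h2 : (a :: l).sum = a + l.sum := by simp
          omega⟩)))

/-- The action of `g` on `Hom(H_ℚ, H_ℚ ⊗ H_ℚ)`:  `g·u = (ρ g ⊗ ρ g) ∘ u ∘ ρ g⁻¹`. -/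
def actHom (ρ : G →* (V n →ₗ[ℚ] V n)) (g : G) (u : V n →ₗ[ℚ] V n ⊗[ℚ] V n) :
    V n →ₗ[ℚ] V n ⊗[ℚ] V n :=
  (TensorProduct.map (ρ g) (ρ g)) ∘ₗ u ∘ₗ (ρ g⁻¹)

/-- The twisted cochain
`z_p(g₁,…,g_p) = π_p(r_p(b_p(t(g₁) ⊗ (g₁·t(g₂)) ⊗ ⋯ ⊗ ((g₁⋯g_{p-1})·t(g_p)))))`. -/
def zpGen (t : G → (V n →ₗ[ℚ] V n ⊗[ℚ] V n)) (ρ : G →* (V n →ₗ[ℚ] V n))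
    (p : ℕ) (g : Fin p → G) : ⋀[ℚ]^p (V n) :=
  pip n p (rp n p (Bfun n p
    (fun k => actHom n ρ ((List.ofFn g).take k).prod (t (g k)))))

end Cochains

lemma extMap_mem (n : ℕ) (f : V n →ₗ[ℚ] V n) :
    ∀ (m : ℕ) (x : ExteriorAlgebra ℚ (V n)), x ∈ ⋀[ℚ]^m (V n) →
      ExteriorAlgebra.map f x ∈ ⋀[ℚ]^m (V n) := by
  intro m
  induction m with
  | zero =>
    intro x hx
    have hx0 : x ∈ LinearMap.range (ExteriorAlgebra.ι ℚ (M := V n)) ^ 0 := hx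
    rw [pow_zero] at hx0
    show ExteriorAlgebra.map f x ∈ LinearMap.range (ExteriorAlgebra.ι ℚ (M := V n)) ^ 0
    rw [pow_zero]
    obtain ⟨y, hy⟩ := Submodule.mem_one.1 hx0
    exact Submodule.mem_one.2 ⟨y, by
      rw [← hy]; exact ((ExteriorAlgebra.map f).commutes y).symm⟩
  | succ m ih =>
    intro x hx
    have hx0 : x ∈ LinearMap.range (ExteriorAlgebra.ι ℚ (M := V n)) ^ m *
        LinearMap.range (ExteriorAlgebra.ι ℚ (M := V n)) := by
      rw [← pow_succ]; exact hx
    show ExteriorAlgebra.map f x ∈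
      LinearMap.range (ExteriorAlgebra.ι ℚ (M := V n)) ^ (m+1)
    rw [pow_succ]
    refine Submodule.mul_induction_on hx0 ?_ ?_
    · intro a ha b hb
      rw [map_mul]
      refine Submodule.mul_mem_mul (ih a ha) ?_
      obtain ⟨v, hv⟩ := hb
      exact ⟨f v, by rw [← hv, ExteriorAlgebra.map_apply_ι]⟩
    · intro a b ha hb
      rw [map_add]; exact add_mem ha hb

/-- The linear endomorphism of `⋀^m V` induced by a linear endomorphism of `V`
(diagonal action on the exterior power). -/
def extMap (n : ℕ) (m : ℕ) (f : V n →ₗ[ℚ] V n) :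
    ⋀[ℚ]^m (V n) →ₗ[ℚ] ⋀[ℚ]^m (V n) :=
  LinearMap.restrict (ExteriorAlgebra.map f).toLinearMap (extMap_mem n f m)

/-- The representation of `G` on `⋀^m V` induced by a representation on `V`. -/
def extRepHom {G : Type} [Group G] (n m : ℕ) (ρ : G →* (V n →ₗ[ℚ] V n)) :
    G →* (⋀[ℚ]^m (V n) →ₗ[ℚ] ⋀[ℚ]^m (V n)) where
  toFun g := extMap n m (ρ g)
  map_one' := by
    refine LinearMap.ext fun x => Subtype.ext ?_
    show ExteriorAlgebra.map (ρ 1) x.1 = x.1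
    rw [map_one]
    show ExteriorAlgebra.map LinearMap.id x.1 = x.1
    rw [ExteriorAlgebra.map_id]
    rfl
  map_mul' g h := by
    refine LinearMap.ext fun x => Subtype.ext ?_
    show ExteriorAlgebra.map (ρ (g * h)) x.1
      = ExteriorAlgebra.map (ρ g) (ExteriorAlgebra.map (ρ h) x.1)
    rw [map_mul]
    show ExteriorAlgebra.map (ρ g ∘ₗ ρ h) x.1 = _
    rw [← ExteriorAlgebra.map_comp_map]
    rfl

section Z

variable {G : Type} [Group G] (n : ℕ)

/-- The twisted cochain `z_λ`: `z_λ = z_{λ₁}(first block) ∧ ρ(g₁⋯g_{λ₁})(z_{rest}(rest))`. -/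
def zList (t : G → (V n →ₗ[ℚ] V n ⊗[ℚ] V n)) (ρ : G →* (V n →ₗ[ℚ] V n)) :
    (l : List ℕ) → (Fin l.sum → G) → ⋀[ℚ]^(l.sum) (V n)
  | [] => fun _ => ecast n (by simp) (oneE n)
  | a :: l => fun g =>
    ecast n (by simp)
      (wedgeMap n a l.sum
        (zpGen n t ρ a (fun i => g ⟨i.1, by
          have h2 : (a :: l).sum = a + l.sum := by simp
          omega⟩))
        (extMap n l.sum
          (ρ ((List.ofFn (fun i : Fin a => g ⟨i.1, by
            have h2 : (a :: l).sum = a + l.sum := by simp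
            omega⟩)).prod))
          (zList t ρ l (fun i => g ⟨a + i.1, by
            have h1 := i.2
            have h2 : (a :: l).sum = a + l.sum := by simp
            omega⟩))))

end Z

def permRep {G : Type} [Group G] {n : ℕ} (perm : G →* Equiv.Perm (Fin n)) :
    G →* (V n →ₗ[ℚ] V n) where
  toFun g := LinearMap.funLeft ℚ ℚ ((perm g)⁻¹ : Equiv.Perm (Fin n))
  map_one' := by
    refine LinearMap.ext fun v => funext fun i => ?_
    show v ((perm 1)⁻¹ i) = v i
    rw [map_one, inv_one]
    rfl
  map_mul' g h := by
    refine LinearMap.ext fun v => funext fun i => ?_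
    show v ((perm (g*h))⁻¹ i) = v ((perm h)⁻¹ ((perm g)⁻¹ i))
    rw [map_mul, mul_inv_rev]
    rfl

def dcb {G : Type} [Group G] {M : Type} [AddCommGroup M] [Module ℚ M]
    (ρ : G →* (M →ₗ[ℚ] M)) (q : ℕ) (f : (Fin q → G) → M) : (Fin (q+1) → G) → M :=
  fun g => ρ (g 0) (f (fun i => g i.succ)) +
    ∑ j : Fin (q+1), ((-1 : ℚ) ^ ((j : ℕ) + 1)) • f (Fin.contractNth j (· * ·) g)

def IsCoboundary {G : Type} [Group G] {M : Type} [AddCommGroup M] [Module ℚ M]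
    (ρ : G →* (M →ₗ[ℚ] M)) : (q : ℕ) → ((Fin q → G) → M) → Prop
  | 0, f => f = 0
  | (q+1), f => ∃ b : (Fin q → G) → M, f = dcb ρ q b

def trivRep (G : Type) [Group G] (M : Type) [AddCommGroup M] [Module ℚ M] :
    G →* (M →ₗ[ℚ] M) := 1

def posParts (l : List ℕ) : List ℕ := l.filter (fun a => decide (0 < a))

lemma posParts_sum (l : List ℕ) : (posParts l).sum = l.sum := by
  induction l with
  | nil => rfl
  | cons a l ih =>
    by_cases h : 0 < a
    · simp only [posParts, List.filter_cons, h] at ih ⊢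
      simp only [if_pos, decide_eq_true_eq, List.sum_cons]
      rw [ih]
    · have ha : a = 0 := by omega
      subst ha
      simp only [posParts, List.filter_cons] at ih ⊢
      simpa using ih

/-- Partitions of `q` into `n - q` nonnegative parts, written in decreasing order. -/
def Pnq (n q : ℕ) : Type :=
  {l : List ℕ // l.length = n - q ∧ l.Pairwise (· ≥ ·) ∧ l.sum = q}

/-- Pullback to `Fin q` blocks of the partition cochain `c_λ` (using the positive parts). -/
def cPart {G : Type} [Group G] (n q : ℕ) (t : G → (V n →ₗ[ℚ] V n ⊗[ℚ] V n))
    (lam : Pnq n q) (g : Fin q → G) : ⋀[ℚ]^q (V n) :=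
  ecast n (by rw [posParts_sum, lam.2.2.2])
    (cList n t (posParts lam.1)
      (fun i => g (Fin.cast (by rw [posParts_sum, lam.2.2.2]) i)))

/-- The twisted partition cochain `z_λ` for a partition given as a list of positive parts. -/
def zPart {G : Type} [Group G] (n q : ℕ) (t : G → (V n →ₗ[ℚ] V n ⊗[ℚ] V n))
    (ρ : G →* (V n →ₗ[ℚ] V n)) (l : List ℕ) (h : l.sum = q) (g : Fin q → G) :
    ⋀[ℚ]^q (V n) :=
  ecast n h (zList n t ρ l (fun i => g (Fin.cast h i)))


/-! Pure braids act trivially on `H`, and on automorphisms acting trivially on `H` the map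
`τ₁` is additive: the terms `θ₂(φ⁻¹ γ)` telescope. Hence `g ↦ τ(g)` is a homomorphism
`P_n → Hom(H_ℚ, H_ℚ ⊗ H_ℚ)`, and `c_p`, `c_λ` are of the form `F(τ g₁, …, τ g_q)` with `F`
multilinear. For trivial coefficients such a cochain is a cocycle: by additivity of `F` in the
contracted slot, the face `g_j g_{j+1}` splits into the two adjacent deletions, and the
alternating sum of the coboundary telescopes to zero. -/
section Cocycle

variable {α W : Type*} {M : Type} [AddCommMonoid W] [Module ℚ W] [AddCommGroup M] [Module ℚ M]
  {q : ℕ}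

lemma Fin.contractNth_castSucc_eq_update (op : α → α → α) (u : Fin (q + 1) → α)
    (j : Fin q) :
    Fin.contractNth j.castSucc op u
      = Function.update (j.castSucc.removeNth u) j (op (u j.castSucc) (u j.succ)) := by
  ext k
  rcases lt_trichotomy k j with h | rfl | h
  · rw [Function.update_of_ne h.ne, Fin.contractNth_apply_of_lt _ _ _ _ h,
      Fin.removeNth_apply, Fin.succAbove_castSucc_of_lt _ _ h]
  · rw [Function.update_self, Fin.contractNth_apply_of_eq _ _ _ _ rfl]
  · rw [Function.update_of_ne h.ne', Fin.contractNth_apply_of_gt _ _ _ _ h,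
      Fin.removeNth_apply, Fin.succAbove_castSucc_of_le _ _ h.le]

lemma Fin.update_removeNth_castSucc (u : Fin (q + 1) → α) (j : Fin q) :
    Function.update (j.castSucc.removeNth u) j (u j.castSucc) = j.succ.removeNth u := by
  ext k
  rcases lt_trichotomy k j with h | rfl | h
  · rw [Function.update_of_ne h.ne, Fin.removeNth_apply, Fin.removeNth_apply,
      Fin.succAbove_castSucc_of_lt _ _ h, Fin.succAbove_succ_of_le _ _ h.le]
  · rw [Function.update_self, Fin.removeNth_apply, Fin.succAbove_succ_self]
  · rw [Function.update_of_ne h.ne', Fin.removeNth_apply, Fin.removeNth_apply,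
      Fin.succAbove_castSucc_of_le _ _ h.le, Fin.succAbove_succ_of_lt _ _ h]

lemma Fin.contractNth_last (op : α → α → α) (u : Fin (q + 1) → α) :
    Fin.contractNth (Fin.last q) op u = Fin.init u :=
  funext fun k => Fin.contractNth_apply_of_lt _ _ _ _ k.isLt

lemma MultilinearMap.map_contractNth_castSucc_add
    (F : MultilinearMap ℚ (fun _ : Fin q => W) M) (u : Fin (q + 1) → W) (j : Fin q) :
    F (Fin.contractNth j.castSucc (· + ·) u)
      = F (j.castSucc.removeNth u) + F (j.succ.removeNth u) := by
  have hself : Function.update (j.castSucc.removeNth u) j (u j.succ) = j.castSucc.removeNth u :=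
    Function.update_eq_self_iff.2 (by rw [Fin.removeNth_apply, Fin.succAbove_castSucc_self])
  rw [Fin.contractNth_castSucc_eq_update, F.map_update_add, hself,
    Fin.update_removeNth_castSucc, add_comm]

lemma Fin.alternating_sum_telescope : ∀ {q : ℕ} (B : Fin (q + 1) → M),
    B 0 + ∑ j : Fin q, (-1 : ℚ) ^ ((j : ℕ) + 1) • (B j.castSucc + B j.succ)
      + (-1 : ℚ) ^ (q + 1) • B (Fin.last q) = 0
  | 0, B => by simp
  | q + 1, B => by
    have ih := Fin.alternating_sum_telescope (fun i : Fin (q + 1) => B i.castSucc)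
    simp only [Fin.castSucc_zero] at ih
    rw [Fin.sum_univ_castSucc]
    simp only [Fin.val_castSucc, Fin.val_last, Fin.succ_last, Fin.succ_castSucc]
    linear_combination (norm := module) ih

theorem dcb_trivRep_multilinear_eq_zero {G : Type} [Group G]
    (F : MultilinearMap ℚ (fun _ : Fin q => W) M) (t : G → W)
    (ht : ∀ g h : G, t (g * h) = t g + t h) :
    dcb (trivRep G M) q (fun g => F (fun k => t (g k))) = 0 := by
  funext g
  have hcontract (j : Fin (q + 1)) :
      (fun k => t (Fin.contractNth j (· * ·) g k)) = Fin.contractNth j (· + ·) (t ∘ g) :=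
    Fin.comp_contractNth _ _ ht j g
  simp only [dcb, hcontract, Fin.sum_univ_castSucc, F.map_contractNth_castSucc_add,
    Fin.contractNth_last]
  have htriv : trivRep G M (g 0) = LinearMap.id := rfl
  have h0 : (fun k => t (g k.succ)) = (0 : Fin (q + 1)).removeNth (t ∘ g) := rfl
  have hlast : Fin.init (t ∘ g) = (Fin.last q).removeNth (t ∘ g) := (Fin.removeNth_last _).symm
  rw [htriv, LinearMap.id_apply, h0, hlast, ← add_assoc]
  simpa only [Fin.val_castSucc, Fin.val_last, Pi.zero_apply] using
    Fin.alternating_sum_telescope (fun i => F (i.removeNth (t ∘ g)))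

end Cocycle

section Multilinear

variable (n : ℕ)

lemma expandLeft_add (m : ℕ) (u v : V n →ₗ[ℚ] V n ⊗[ℚ] V n) :
    expandLeft n m (u + v) = expandLeft n m u + expandLeft n m v := by
  rw [expandLeft, LinearMap.rTensor_add]
  exact LinearMap.comp_add _ _ _

lemma expandLeft_smul (m : ℕ) (c : ℚ) (u : V n →ₗ[ℚ] V n ⊗[ℚ] V n) :
    expandLeft n m (c • u) = c • expandLeft n m u := by
  rw [expandLeft, LinearMap.rTensor_smul]
  exact LinearMap.comp_smul _ _ _

lemma Bfun_succ (p : ℕ) (u : Fin (p + 1) → (V n →ₗ[ℚ] V n ⊗[ℚ] V n)) :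
    Bfun n (p + 1) u = expandLeft n p (u 0) ∘ₗ Bfun n p (Fin.tail u) := rfl

lemma Bfun_update_add : ∀ (p : ℕ) (u : Fin p → (V n →ₗ[ℚ] V n ⊗[ℚ] V n))
    (k : Fin p) (a b : V n →ₗ[ℚ] V n ⊗[ℚ] V n),
    Bfun n p (Function.update u k (a + b))
      = Bfun n p (Function.update u k a) + Bfun n p (Function.update u k b)
  | 0, _, k, _, _ => k.elim0
  | p + 1, u, k, a, b => by
    cases k using Fin.cases with
    | zero =>
      simp only [Bfun_succ, Function.update_self, Fin.tail_update_zero, expandLeft_add,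
        LinearMap.add_comp]
    | succ j =>
      simp only [Bfun_succ, Fin.tail_update_succ, Bfun_update_add p,
        Function.update_of_ne (Fin.succ_ne_zero j).symm, LinearMap.comp_add]

lemma Bfun_update_smul : ∀ (p : ℕ)
    (u : Fin p → (V n →ₗ[ℚ] V n ⊗[ℚ] V n)) (k : Fin p) (c : ℚ) (a : V n →ₗ[ℚ] V n ⊗[ℚ] V n),
    Bfun n p (Function.update u k (c • a)) = c • Bfun n p (Function.update u k a)
  | 0, _, k, _, _ => k.elim0
  | p + 1, u, k, c, a => by
    cases k using Fin.cases with
    | zero =>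
      simp only [Bfun_succ, Function.update_self, Fin.tail_update_zero, expandLeft_smul,
        LinearMap.smul_comp]
    | succ j =>
      simp only [Bfun_succ, Fin.tail_update_succ, Bfun_update_smul p,
        Function.update_of_ne (Fin.succ_ne_zero j).symm, LinearMap.comp_smul]

def BfunMultilinear (p : ℕ) :
    MultilinearMap ℚ (fun _ : Fin p => V n →ₗ[ℚ] V n ⊗[ℚ] V n)
      (V n →ₗ[ℚ] (Tp n (p + 1) : Type)) :=
  .mk' (Bfun n p) (Bfun_update_add n p) (Bfun_update_smul n p)

def rpLinear (p : ℕ) : (V n →ₗ[ℚ] (Tp n (p + 1) : Type)) →ₗ[ℚ] (Tp n p : Type) where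
  toFun := rp n p
  map_add' u v := by
    simp only [rp, LinearMap.add_apply, ← Finset.sum_add_distrib]
    exact Finset.sum_congr rfl fun i _ => (congrArg _ (map_add _ _ _)).trans (map_add _ _ _)
  map_smul' c u := by
    simp only [rp, LinearMap.smul_apply, RingHom.id_apply, Finset.smul_sum]
    exact Finset.sum_congr rfl fun i _ => (congrArg _ (map_smul _ _ _)).trans (map_smul _ _ _)

def cpGenMultilinear (p : ℕ) :
    MultilinearMap ℚ (fun _ : Fin p => V n →ₗ[ℚ] V n ⊗[ℚ] V n) (⋀[ℚ]^p (V n)) :=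
  (pip n p ∘ₗ rpLinear n p).compMultilinearMap (BfunMultilinear n p)

lemma cpGen_eq {G : Type} [Group G] (t : G → V n →ₗ[ℚ] V n ⊗[ℚ] V n) (p : ℕ)
    (g : Fin p → G) :
    cpGen n t p g = cpGenMultilinear n p (fun k => t (g k)) := rfl

def cListMultilinear : (l : List ℕ) →
    MultilinearMap ℚ (fun _ : Fin l.sum => V n →ₗ[ℚ] V n ⊗[ℚ] V n) (⋀[ℚ]^(l.sum) (V n))
  | [] =>
    haveI : IsEmpty (Fin ([] : List ℕ).sum) := Fin.isEmpty'
    MultilinearMap.constOfIsEmpty ℚ _ (ecast n (by simp) (oneE n))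
  | a :: l =>
    (((ecast n (by simp : a + l.sum = (a :: l).sum)).comp
        (TensorProduct.lift (wedgeMap n a l.sum))).compMultilinearMap
      ((cpGenMultilinear n a).domCoprod (cListMultilinear l))).domDomCongr
        (finSumFinEquiv.trans (finCongr (by simp)))

lemma cList_eq {G : Type} [Group G] (t : G → V n →ₗ[ℚ] V n ⊗[ℚ] V n) :
    ∀ (l : List ℕ) (g : Fin l.sum → G),
      cList n t l g = cListMultilinear n l (fun i => t (g i))
  | [], _ => rfl
  | a :: l, g => by
    simp only [cList, cListMultilinear, MultilinearMap.domDomCongr_apply,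
      LinearMap.compMultilinearMap_apply, MultilinearMap.domCoprod_apply, LinearMap.comp_apply,
      TensorProduct.lift.tmul, cList_eq t l]
    rfl

end Multilinear

section Abelianization

variable {n : ℕ}

lemma aMap_mul (γ δ : FreeGroup (Fin n)) : aMap n (γ * δ) = aMap n γ + aMap n δ := by
  rw [aMap, map_mul]; rfl

lemma aMap_inv (γ : FreeGroup (Fin n)) : aMap n γ⁻¹ = -aMap n γ := by
  rw [aMap, map_inv]; rfl

lemma aMap_of (i : Fin n) : aMap n (FreeGroup.of i) = Xz n i :=
  congrArg Prod.fst (FreeGroup.lift_apply_of : Theta n (.of i) = ((Xz n i, 0) : Mn n))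

lemma Hz.addHom_ext {K : Type*} [AddCommMonoid K] {f g : Hz n →+ K}
    (h : ∀ i, f (Xz n i) = g (Xz n i)) : f = g :=
  Finsupp.addHom_ext' fun i => AddMonoidHom.ext_int (h i)

variable {Φ : MulAut (FreeGroup (Fin n)) → (Hz n →+ Hz n)}

lemma Phi_mul (hΦ : ∀ φ γ, Φ φ (aMap n γ) = aMap n (φ γ))
    (φ ψ : MulAut (FreeGroup (Fin n))) :
    Φ (φ * ψ) = (Φ φ).comp (Φ ψ) :=
  Hz.addHom_ext fun i => by simp only [← aMap_of, AddMonoidHom.comp_apply, hΦ]; rfl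

lemma Phi_one (hΦ : ∀ φ γ, Φ φ (aMap n γ) = aMap n (φ γ)) :
    Φ 1 = AddMonoidHom.id (Hz n) :=
  Hz.addHom_ext fun i => by rw [← aMap_of, hΦ]; rfl

end Abelianization

section Torelli

variable {n : ℕ} {Φ : MulAut (FreeGroup (Fin n)) → (Hz n →+ Hz n)}
  {τ : MulAut (FreeGroup (Fin n)) → (Hz n →+ HHz n)}

lemma aMap_inv_apply_of_Phi_eq_id (hΦ : ∀ φ γ, Φ φ (aMap n γ) = aMap n (φ γ))
    {φ : MulAut (FreeGroup (Fin n))} (hφ : Φ φ = AddMonoidHom.id _) (γ : FreeGroup (Fin n)) :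
    aMap n (φ⁻¹ γ) = aMap n γ := by
  simpa only [hφ, AddMonoidHom.id_apply, MulAut.apply_inv_self]
    using hΦ φ (φ⁻¹ γ)

lemma tau_apply_of_Phi_eq_id
    (hτ : ∀ φ γ, τ φ (aMap n γ) = theta2 n γ -
      (TensorProduct.map (Φ φ).toIntLinearMap (Φ φ).toIntLinearMap) (theta2 n (φ⁻¹ γ)))
    {φ : MulAut (FreeGroup (Fin n))} (hφ : Φ φ = AddMonoidHom.id _) (γ : FreeGroup (Fin n)) :
    τ φ (aMap n γ) = theta2 n γ - theta2 n (φ⁻¹ γ) := by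
  rw [hτ, hφ]
  exact congrArg (theta2 n γ - ·) (LinearMap.congr_fun TensorProduct.map_id _)

lemma tau_mul_of_Phi_eq_id (hΦ : ∀ φ γ, Φ φ (aMap n γ) = aMap n (φ γ))
    (hτ : ∀ φ γ, τ φ (aMap n γ) = theta2 n γ -
      (TensorProduct.map (Φ φ).toIntLinearMap (Φ φ).toIntLinearMap) (theta2 n (φ⁻¹ γ)))
    {φ ψ : MulAut (FreeGroup (Fin n))} (hφ : Φ φ = AddMonoidHom.id _)
    (hψ : Φ ψ = AddMonoidHom.id _) :
    τ (φ * ψ) = τ φ + τ ψ := by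
  have hφψ : Φ (φ * ψ) = AddMonoidHom.id _ := by rw [Phi_mul hΦ, hφ, hψ]; rfl
  refine Hz.addHom_ext fun i => ?_
  rw [← aMap_of, AddMonoidHom.add_apply, tau_apply_of_Phi_eq_id hτ hφψ,
    tau_apply_of_Phi_eq_id hτ hφ, ← aMap_inv_apply_of_Phi_eq_id hΦ hφ,
    tau_apply_of_Phi_eq_id hτ hψ, mul_inv_rev, MulAut.mul_apply]
  abel

end Torelli

section BraidAction

variable {n : ℕ}

lemma aMap_apply_of_eq_swap {β : MulAut (FreeGroup (Fin n))} {i : ℕ} (h1 : i < n)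
    (h2 : i + 1 < n)
    (hβ : β (FreeGroup.of ⟨i, h1⟩) = FreeGroup.of ⟨i + 1, h2⟩ ∧
      β (FreeGroup.of ⟨i + 1, h2⟩) =
        (FreeGroup.of (⟨i + 1, h2⟩ : Fin n))⁻¹ * FreeGroup.of ⟨i, h1⟩ *
          FreeGroup.of ⟨i + 1, h2⟩ ∧
      ∀ j : Fin n, (j : ℕ) ≠ i → (j : ℕ) ≠ i + 1 → β (FreeGroup.of j) = FreeGroup.of j)
    (j : Fin n) :
    aMap n (β (FreeGroup.of j)) = Xz n (Equiv.swap ⟨i, h1⟩ ⟨i + 1, h2⟩ j) := by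
  obtain ⟨hleft, hright, hother⟩ := hβ
  by_cases hj1 : j = ⟨i, h1⟩
  · rw [hj1, hleft, Equiv.swap_apply_left, aMap_of]
  by_cases hj2 : j = ⟨i + 1, h2⟩
  · rw [hj2, hright, Equiv.swap_apply_right, aMap_mul, aMap_mul, aMap_inv, aMap_of, aMap_of]
    abel
  rw [hother j (fun h => hj1 (Fin.ext h)) (fun h => hj2 (Fin.ext h)),
    Equiv.swap_apply_of_ne_of_ne hj1 hj2, aMap_of]

lemma Phi_xi_eq_mapDomain {β : Fin (n-1) → MulAut (FreeGroup (Fin n))}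
    (hβ : ∀ (i : Fin (n-1)) (h1 : (i : ℕ) < n) (h2 : (i : ℕ) + 1 < n),
      β i (FreeGroup.of ⟨i, h1⟩) = FreeGroup.of ⟨(i : ℕ) + 1, h2⟩ ∧
      β i (FreeGroup.of ⟨(i : ℕ) + 1, h2⟩) =
        (FreeGroup.of (⟨(i : ℕ) + 1, h2⟩ : Fin n))⁻¹ * FreeGroup.of ⟨i, h1⟩ *
          FreeGroup.of ⟨(i : ℕ) + 1, h2⟩ ∧
      ∀ j : Fin n, (j : ℕ) ≠ (i : ℕ) → (j : ℕ) ≠ (i : ℕ) + 1 →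
        β i (FreeGroup.of j) = FreeGroup.of j)
    {ξ : Braid (n-1) →* MulAut (FreeGroup (Fin n))} (hξ : ∀ i : Fin (n-1), ξ (sigma i) = β i)
    {perm : Braid (n-1) →* Equiv.Perm (Fin n)}
    (hperm : ∀ (i : Fin (n-1)) (h1 : (i : ℕ) < n) (h2 : (i : ℕ) + 1 < n),
      perm (sigma i) = Equiv.swap ⟨i, h1⟩ ⟨(i : ℕ) + 1, h2⟩)
    {Φ : MulAut (FreeGroup (Fin n)) → (Hz n →+ Hz n)}
    (hΦ : ∀ φ γ, Φ φ (aMap n γ) = aMap n (φ γ)) (b : Braid (n-1)) :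
    Φ (ξ b) = Finsupp.mapDomain.addMonoidHom (perm b) := by
  let ΦHom : MulAut (FreeGroup (Fin n)) →* AddMonoid.End (Hz n) :=
    ⟨⟨Φ, Phi_one hΦ⟩, Phi_mul hΦ⟩
  let permHom : Equiv.Perm (Fin n) →* AddMonoid.End (Hz n) :=
    ⟨⟨fun σ => Finsupp.mapDomain.addMonoidHom σ, Finsupp.mapDomain.addMonoidHom_id⟩,
      fun σ σ' => Finsupp.mapDomain.addMonoidHom_comp σ σ'⟩
  have hgen (i : Fin (n-1)) :
      Φ (ξ (sigma i)) = Finsupp.mapDomain.addMonoidHom (perm (sigma i)) := by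
    have h2 : (i : ℕ) + 1 < n := by omega
    rw [hξ, hperm i (by omega) h2]
    refine Hz.addHom_ext fun j => ?_
    calc Φ (β i) (Xz n j) = aMap n (β i (FreeGroup.of j)) := by rw [← hΦ, aMap_of]
      _ = Xz n _ := aMap_apply_of_eq_swap _ h2 (hβ i _ h2) j
      _ = _ := Finsupp.mapDomain_single.symm
  -- `PresentedGroup.ext` needs a group as target, hence the detour through the units.
  have hext : (ΦHom.comp ξ).toHomUnits = (permHom.comp perm).toHomUnits :=
    PresentedGroup.ext fun i => Units.ext (hgen i)
  exact congrArg Units.val (DFunLike.congr_fun hext b)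

end BraidAction

lemma tauQ_add {n : ℕ} (t₁ t₂ : Hz n →+ HHz n) :
    tauQ n (t₁ + t₂) = tauQ n t₁ + tauQ n t₂ := by
  rw [tauQ, tauQ, tauQ, ← map_add]
  congr 1
  funext i
  exact map_add _ _ _

theorem stmt5_general (n : ℕ)
    (β : Fin (n-1) → MulAut (FreeGroup (Fin n)))
    (hβ : ∀ (i : Fin (n-1)) (h1 : (i : ℕ) < n) (h2 : (i : ℕ) + 1 < n),
      β i (FreeGroup.of ⟨i, h1⟩) = FreeGroup.of ⟨(i : ℕ) + 1, h2⟩ ∧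
      β i (FreeGroup.of ⟨(i : ℕ) + 1, h2⟩) =
        (FreeGroup.of (⟨(i : ℕ) + 1, h2⟩ : Fin n))⁻¹ * FreeGroup.of ⟨i, h1⟩ *
          FreeGroup.of ⟨(i : ℕ) + 1, h2⟩ ∧
      ∀ j : Fin n, (j : ℕ) ≠ (i : ℕ) → (j : ℕ) ≠ (i : ℕ) + 1 →
        β i (FreeGroup.of j) = FreeGroup.of j)
    (ξ : Braid (n-1) →* MulAut (FreeGroup (Fin n)))
    (hξ : ∀ i : Fin (n-1), ξ (sigma i) = β i)
    (perm : Braid (n-1) →* Equiv.Perm (Fin n))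
    (hperm : ∀ (i : Fin (n-1)) (h1 : (i : ℕ) < n) (h2 : (i : ℕ) + 1 < n),
      perm (sigma i) = Equiv.swap ⟨i, h1⟩ ⟨(i : ℕ) + 1, h2⟩)
    (Φ : MulAut (FreeGroup (Fin n)) → (Hz n →+ Hz n))
    (hΦ : ∀ (φ : MulAut (FreeGroup (Fin n))) (γ : FreeGroup (Fin n)),
      Φ φ (aMap n γ) = aMap n (φ γ))
    (τ : MulAut (FreeGroup (Fin n)) → (Hz n →+ HHz n))
    (hτ : ∀ (φ : MulAut (FreeGroup (Fin n))) (γ : FreeGroup (Fin n)),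
      τ φ (aMap n γ) = theta2 n γ -
        (TensorProduct.map (Φ φ).toIntLinearMap (Φ φ).toIntLinearMap)
          (theta2 n (φ⁻¹ γ)))
 :
    (∀ p : ℕ, 1 ≤ p →
      dcb (trivRep ↥perm.ker (⋀[ℚ]^p (V n))) p
        (cpGen n (fun g : ↥perm.ker => tauQ n (τ (ξ (g : Braid (n-1))))) p) = 0) ∧
    (∀ l : List ℕ, l.Pairwise (· ≥ ·) → (∀ a ∈ l, 0 < a) →
      dcb (trivRep ↥perm.ker (⋀[ℚ]^(l.sum) (V n))) l.sum
        (cList n (fun g : ↥perm.ker => tauQ n (τ (ξ (g : Braid (n-1))))) l) = 0) := by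
  have hker (b : ↥perm.ker) : Φ (ξ b) = AddMonoidHom.id _ := by
    rw [Phi_xi_eq_mapDomain hβ hξ hperm hΦ, MonoidHom.mem_ker.1 b.2]
    exact Finsupp.mapDomain.addMonoidHom_id
  let t : ↥perm.ker → V n →ₗ[ℚ] V n ⊗[ℚ] V n := fun g => tauQ n (τ (ξ g))
  have ht (g h : ↥perm.ker) : t (g * h) = t g + t h := by
    simp only [t, Subgroup.coe_mul, map_mul, tau_mul_of_Phi_eq_id hΦ hτ (hker g) (hker h), tauQ_add]
  refine ⟨fun p _ => ?_, fun l _ _ => ?_⟩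
  · rw [funext (cpGen_eq n t p)]
    exact dcb_trivRep_multilinear_eq_zero (cpGenMultilinear n p) t ht
  · rw [funext (cList_eq n t l)]
    exact dcb_trivRep_multilinear_eq_zero (cListMultilinear n l) t ht

theorem stmt5 (n : ℕ) (hn : 2 ≤ n)
    (β : Fin (n-1) → MulAut (FreeGroup (Fin n)))
    (hβ : ∀ (i : Fin (n-1)) (h1 : (i : ℕ) < n) (h2 : (i : ℕ) + 1 < n),
      β i (FreeGroup.of ⟨i, h1⟩) = FreeGroup.of ⟨(i : ℕ) + 1, h2⟩ ∧
      β i (FreeGroup.of ⟨(i : ℕ) + 1, h2⟩) =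
        (FreeGroup.of (⟨(i : ℕ) + 1, h2⟩ : Fin n))⁻¹ * FreeGroup.of ⟨i, h1⟩ *
          FreeGroup.of ⟨(i : ℕ) + 1, h2⟩ ∧
      ∀ j : Fin n, (j : ℕ) ≠ (i : ℕ) → (j : ℕ) ≠ (i : ℕ) + 1 →
        β i (FreeGroup.of j) = FreeGroup.of j)
    (ξ : Braid (n-1) →* MulAut (FreeGroup (Fin n)))
    (hξ : ∀ i : Fin (n-1), ξ (sigma i) = β i)
    (perm : Braid (n-1) →* Equiv.Perm (Fin n))
    (hperm : ∀ (i : Fin (n-1)) (h1 : (i : ℕ) < n) (h2 : (i : ℕ) + 1 < n),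
      perm (sigma i) = Equiv.swap ⟨i, h1⟩ ⟨(i : ℕ) + 1, h2⟩)
    (Φ : MulAut (FreeGroup (Fin n)) → (Hz n →+ Hz n))
    (hΦ : ∀ (φ : MulAut (FreeGroup (Fin n))) (γ : FreeGroup (Fin n)),
      Φ φ (aMap n γ) = aMap n (φ γ))
    (τ : MulAut (FreeGroup (Fin n)) → (Hz n →+ HHz n))
    (hτ : ∀ (φ : MulAut (FreeGroup (Fin n))) (γ : FreeGroup (Fin n)),
      τ φ (aMap n γ) = theta2 n γ -
        (TensorProduct.map (Φ φ).toIntLinearMap (Φ φ).toIntLinearMap)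
          (theta2 n (φ⁻¹ γ)))
 :
    (∀ p : ℕ, 1 ≤ p →
      dcb (trivRep ↥perm.ker (⋀[ℚ]^p (V n))) p
        (cpGen n (fun g : ↥perm.ker => tauQ n (τ (ξ (g : Braid (n-1))))) p) = 0) ∧
    (∀ l : List ℕ, l.Pairwise (· ≥ ·) → (∀ a ∈ l, 0 < a) →
      dcb (trivRep ↥perm.ker (⋀[ℚ]^(l.sum) (V n))) l.sum
        (cList n (fun g : ↥perm.ker => tauQ n (τ (ξ (g : Braid (n-1))))) l) = 0) :=
  stmt5_general n β hβ ξ hξ perm hperm Φ hΦ τ hτ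
end
end

section
/- The abelianization of the pure braid group P_n is free abelian of rank n(n−1)/2 with basis the classes of the elements A_{i,j}: the group homomorphism from the free abelian group on the set {(i,j) : 1 ≤ i < j ≤ n} to the abelianization of P_n sending the basis element (i,j) to the class of A_{i,j} is an isomorphism. -/
noncomputable section
open scoped TensorProduct

/-!
The subgroup `N` of `B_n` generated by the `A_{i,j}` is normal: conjugating an `A_{i,j}` by a
generator `σ_k` gives another `A`, or the conjugate of one by `σ_k² = A_{k,k+1}`. In `B_n / N` the
images `t_k` of the `σ_k` are involutions satisfying the Coxeter relations of type `A`, so every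
element of the subgroup generated by `t_0, …, t_d` is `h · t_d t_{d-1} ⋯ t_j` with `h` generated by
`t_0, …, t_{d-1}`; comparing where the induced permutation sends `j` shows, by induction on `d`,
that `B_n / N → S_n` is injective. Hence `P_n = N`, and the classes of the `A_{i,j}` generate its
abelianization.

They are independent because `σ_k ↦ (e_{k,k+1}, (k k+1))` defines a homomorphism
`B_n → ℤ^{pairs} ⋊ S`, whose first component restricts to a homomorphism on `P_n` sending
`A_{i,j}` to `2 e_{i,j}`.
-/

section CoxeterRelations

variable {G : Type*} [Group G] {m : ℕ} {t : ℕ → G}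

/-- `descProd t d j = t d * t (d - 1) * ⋯ * t j`, and `1` when `d < j`. -/
def descProd (t : ℕ → G) (d j : ℕ) : G :=
  if j ≤ d then descProd t d (j + 1) * t j else 1
termination_by d + 1 - j

lemma descProd_of_le {d j : ℕ} (h : j ≤ d) : descProd t d j = descProd t d (j + 1) * t j := by
  rw [descProd, if_pos h]

lemma descProd_of_lt {d j : ℕ} (h : d < j) : descProd t d j = 1 := by
  rw [descProd, if_neg (by omega)]

section

variable {f : G →* Equiv.Perm (Fin (m + 1))}
  (hf : ∀ k (hk : k < m), f (t k) = Equiv.swap ⟨k, by omega⟩ ⟨k + 1, by omega⟩)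
include hf

lemma map_descProd_apply {d j : ℕ} (hd : d < m) (hj : j ≤ d + 1) :
    f (descProd t d j) ⟨j, by omega⟩ = ⟨d + 1, by omega⟩ := by
  by_cases h : j ≤ d
  · rw [descProd_of_le h, map_mul, Equiv.Perm.mul_apply, hf j (by omega), Equiv.swap_apply_left]
    exact map_descProd_apply hd (by omega)
  · obtain rfl : j = d + 1 := by omega
    rw [descProd_of_lt (by omega), map_one, Equiv.Perm.one_apply]
termination_by d + 1 - j

lemma closure_le_comap_fixingSubgroup {d : ℕ} (hd : d ≤ m) :
    Subgroup.closure (t '' Set.Iio d) ≤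
      (fixingSubgroup (Equiv.Perm (Fin (m + 1))) {x : Fin (m + 1) | d < x}).comap f := by
  rw [Subgroup.closure_le]
  rintro _ ⟨k, hk, rfl⟩ ⟨x, hx : d < (x : ℕ)⟩
  rw [Set.mem_Iio] at hk
  change f (t k) x = x
  rw [hf k (by omega)]
  exact Equiv.swap_apply_of_ne_of_ne (Fin.ne_of_val_ne (show (x : ℕ) ≠ k by omega))
    (Fin.ne_of_val_ne (show (x : ℕ) ≠ k + 1 by omega))

end

variable (hcomm : ∀ k l, k + 2 ≤ l → l < m → Commute (t k) (t l))
include hcomm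

lemma commute_descProd {d j k : ℕ} (hd : d < m) (h : k + 2 ≤ j) :
    Commute (t k) (descProd t d j) := by
  by_cases hj : j ≤ d
  · rw [descProd_of_le hj]
    exact (commute_descProd hd (by omega)).mul_right (hcomm k j h (by omega))
  · rw [descProd_of_lt (by omega)]
    exact Commute.one_right _
termination_by d + 1 - j

variable (hbraid : ∀ k, k + 2 ≤ m → t k * t (k + 1) * t k = t (k + 1) * t k * t (k + 1))
include hbraid

lemma descProd_mul_succ_eq_mul {d j k : ℕ} (hd : d < m) (hjk : j ≤ k) (hk : k + 1 ≤ d) :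
    descProd t d j * t (k + 1) = t k * descProd t d j := by
  obtain rfl | hjk := hjk.eq_or_lt
  · have hsplit : descProd t d j = descProd t d (j + 2) * t (j + 1) * t j := by
      rw [descProd_of_le (by omega), descProd_of_le (by omega : j + 1 ≤ d)]
    calc descProd t d j * t (j + 1)
        = descProd t d (j + 2) * (t (j + 1) * t j * t (j + 1)) := by rw [hsplit]; group
      _ = descProd t d (j + 2) * t j * (t (j + 1) * t j) := by
          rw [← hbraid j (by omega)]; group
      _ = t j * descProd t d (j + 2) * (t (j + 1) * t j) := by
          rw [← (commute_descProd hcomm hd le_rfl).eq]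
      _ = t j * descProd t d j := by rw [hsplit]; group
  · calc descProd t d j * t (k + 1) = descProd t d (j + 1) * (t j * t (k + 1)) := by
          rw [descProd_of_le (by omega)]; group
      _ = descProd t d (j + 1) * t (k + 1) * t j := by
          rw [(hcomm j (k + 1) (by omega) (by omega)).eq]; group
      _ = t k * descProd t d (j + 1) * t j := by
          rw [descProd_mul_succ_eq_mul (j := j + 1) hd hjk hk]
      _ = t k * descProd t d j := by rw [mul_assoc, ← descProd_of_le (by omega)]
termination_by k - j

variable (hsq : ∀ k < m, t k * t k = 1)
include hsq

lemma exists_descProd_mul_eq {d j k : ℕ} (hd : d < m) (hj : j ≤ d + 1) (hk : k ≤ d) :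
    ∃ h ∈ Subgroup.closure (t '' Set.Iio d), ∃ j' ≤ d + 1,
      descProd t d j * t k = h * descProd t d j' := by
  have mem {k : ℕ} (hk : k < d) : t k ∈ Subgroup.closure (t '' Set.Iio d) :=
    Subgroup.subset_closure ⟨k, hk, rfl⟩
  rcases (by omega : k + 2 ≤ j ∨ k + 1 = j ∨ k = j ∨ j < k) with h | rfl | rfl | h
  · exact ⟨t k, mem (by omega), j, hj, (commute_descProd hcomm hd h).eq.symm⟩
  · exact ⟨1, one_mem _, k, by omega, by rw [one_mul, descProd_of_le hk]⟩
  · refine ⟨1, one_mem _, k + 1, by omega, ?_⟩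
    rw [one_mul, descProd_of_le hk, mul_assoc, hsq k (by omega), mul_one]
  · obtain ⟨k, rfl⟩ : ∃ k', k = k' + 1 := ⟨k - 1, by omega⟩
    exact ⟨t k, mem (by omega), j, hj, descProd_mul_succ_eq_mul hcomm hbraid hd (by omega) hk⟩

lemma exists_eq_mul_descProd {d : ℕ} (hd : d < m) {g : G}
    (hg : g ∈ Subgroup.closure (t '' Set.Iio (d + 1))) :
    ∃ h ∈ Subgroup.closure (t '' Set.Iio d), ∃ j ≤ d + 1, g = h * descProd t d j := by
  suffices ∀ j ≤ d + 1, ∃ h ∈ Subgroup.closure (t '' Set.Iio d), ∃ j' ≤ d + 1,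
      descProd t d j * g = h * descProd t d j' by
    simpa [descProd_of_lt (Nat.lt_succ_self d)] using this (d + 1) le_rfl
  induction hg using Subgroup.closure_induction'' with
  | mem x hx =>
    obtain ⟨k, hk, rfl⟩ := hx
    exact fun j hj => exists_descProd_mul_eq hcomm hbraid hsq hd hj (Nat.lt_succ_iff.1 hk)
  | inv_mem x hx =>
    obtain ⟨k, hk, rfl⟩ := hx
    rw [inv_eq_of_mul_eq_one_right (hsq k (hk.trans_le hd))]
    exact fun j hj => exists_descProd_mul_eq hcomm hbraid hsq hd hj (Nat.lt_succ_iff.1 hk)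
  | one => exact fun j hj => ⟨1, one_mem _, j, hj, by group⟩
  | mul x y _ _ hx hy =>
    intro j hj
    obtain ⟨h₁, hh₁, j₁, hj₁, e₁⟩ := hx j hj
    obtain ⟨h₂, hh₂, j₂, hj₂, e₂⟩ := hy j₁ hj₁
    exact ⟨h₁ * h₂, mul_mem hh₁ hh₂, j₂, hj₂, by rw [← mul_assoc, e₁, mul_assoc, e₂, mul_assoc]⟩

variable {f : G →* Equiv.Perm (Fin (m + 1))}
  (hf : ∀ k (hk : k < m), f (t k) = Equiv.swap ⟨k, by omega⟩ ⟨k + 1, by omega⟩)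
include hf

lemma eq_one_of_mem_closure_of_map_eq_one {d : ℕ} (hd : d ≤ m) {g : G}
    (hg : g ∈ Subgroup.closure (t '' Set.Iio d)) (h1 : f g = 1) : g = 1 := by
  induction d generalizing g with
  | zero => simpa using hg
  | succ d ih =>
    obtain ⟨h, hh, j, hj, rfl⟩ := exists_eq_mul_descProd hcomm hbraid hsq hd hg
    have hfix : f h ⟨d + 1, by omega⟩ = ⟨d + 1, by omega⟩ :=
      closure_le_comap_fixingSubgroup hf (by omega) hh ⟨⟨d + 1, by omega⟩, by simp⟩
    have hj' : j = d + 1 := by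
      have := congr($h1 ⟨j, by omega⟩)
      rw [map_mul, Equiv.Perm.mul_apply, map_descProd_apply hf (by omega) hj, hfix] at this
      simpa [Fin.ext_iff] using this.symm
    subst hj'
    rw [descProd_of_lt (by omega), mul_one] at h1 ⊢
    exact ih (by omega) hh h1

theorem injective_of_coxeter_relations (hgen : Subgroup.closure (t '' Set.Iio m) = ⊤) :
    Function.Injective f :=
  (injective_iff_map_eq_one f).2 fun _ => eq_one_of_mem_closure_of_map_eq_one hcomm hbraid hsq hf
    le_rfl (hgen ▸ Subgroup.mem_top _)

end CoxeterRelations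

section BraidRelation

variable {G : Type*} [Group G] {a b c : G}

lemma Commute.conj_conj_comm (h : Commute a b) (x : G) :
    a * (b * x * b⁻¹) * a⁻¹ = b * (a * x * a⁻¹) * b⁻¹ := by
  calc a * (b * x * b⁻¹) * a⁻¹ = (a * b) * x * (a * b)⁻¹ := by group
    _ = (b * a) * x * (b * a)⁻¹ := by rw [h.eq]
    _ = b * (a * x * a⁻¹) * b⁻¹ := by group

lemma conj_mul_self_of_braid (h : a * b * a = b * a * b) :
    a * (b * (a * a) * b⁻¹) * a⁻¹ = b * b := by
  calc a * (b * (a * a) * b⁻¹) * a⁻¹ = (a * b * a) * (a * b⁻¹ * a⁻¹) := by group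
    _ = (b * a * b) * (a * b⁻¹ * a⁻¹) := by rw [h]
    _ = b * (a * b * a) * (b⁻¹ * a⁻¹) := by group
    _ = b * b := by rw [h]; group

lemma commute_conj_of_braid (h : a * b * a = b * a * b) (hc : Commute b c) :
    Commute a (b * (a * c * a⁻¹) * b⁻¹) := by
  refine mul_inv_eq_iff_eq_mul.1 ?_
  calc a * (b * (a * c * a⁻¹) * b⁻¹) * a⁻¹ = (a * b * a) * c * (a * b * a)⁻¹ := by group
    _ = b * a * (b * c * b⁻¹) * a⁻¹ * b⁻¹ := by rw [h]; group
    _ = b * (a * c * a⁻¹) * b⁻¹ := by rw [hc.mul_inv_cancel]; group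

end BraidRelation

lemma SemidirectProduct.mul_inl_mul_inv {N G : Type*} [CommGroup N] [Group G] {φ : G →* MulAut N}
    (x : N ⋊[φ] G) (n : N) : x * inl n * x⁻¹ = inl (φ x.right n) := by
  ext <;> simp [mul_comm]

section LinkingNumber

variable {α : Type*} [DecidableEq α]

def linkVec (a b : α) : α × α → Multiplicative ℤ :=
  fun p => Multiplicative.ofAdd (if p = (a, b) ∨ p = (b, a) then 1 else 0)

lemma linkVec_comm (a b : α) : linkVec a b = linkVec b a := by
  funext p
  simp only [linkVec, or_comm]

lemma mulAutArrow_linkVec (π : Equiv.Perm α) (a b : α) :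
    mulAutArrow π (linkVec a b) = linkVec (π a) (π b) := by
  funext ⟨c, d⟩
  change linkVec a b (π⁻¹ c, π⁻¹ d) = _
  simp [linkVec, Equiv.symm_apply_eq]

end LinkingNumber

/-- Permutations of all of `ℕ` rather than of `Fin (m + 1)` keep strand indices free of bounds;
only the first component is used, on pure braids. -/
abbrev LinkGroup : Type := (ℕ × ℕ → Multiplicative ℤ) ⋊[mulAutArrow] Equiv.Perm ℕ

def linkGen (k : ℕ) : LinkGroup := ⟨linkVec k (k + 1), Equiv.swap k (k + 1)⟩

lemma linkGen_mul_self (k : ℕ) :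
    linkGen k * linkGen k = SemidirectProduct.inl (linkVec k (k + 1) ^ 2) := by
  ext : 1
  · simp [linkGen, mulAutArrow_linkVec, linkVec_comm k, sq]
  · simp only [linkGen, SemidirectProduct.mul_right, SemidirectProduct.right_inl,
      Equiv.swap_mul_self]

lemma commute_linkGen {k l : ℕ} (h : k + 2 ≤ l) : Commute (linkGen k) (linkGen l) := by
  ext : 1
  · simp only [linkGen, SemidirectProduct.mul_left, mulAutArrow_linkVec]
    rw [Equiv.swap_apply_of_ne_of_ne (by omega) (by omega),
      Equiv.swap_apply_of_ne_of_ne (by omega) (by omega),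
      Equiv.swap_apply_of_ne_of_ne (by omega) (by omega),
      Equiv.swap_apply_of_ne_of_ne (by omega) (by omega), mul_comm]
  · ext x
    simp only [linkGen, SemidirectProduct.mul_right, Equiv.Perm.mul_apply, Equiv.swap_apply_def]
    split_ifs <;> omega

lemma linkGen_braid (k : ℕ) :
    linkGen k * linkGen (k + 1) * linkGen k = linkGen (k + 1) * linkGen k * linkGen (k + 1) := by
  ext : 1
  · have h₁ : k + 1 + 1 ≠ k := by omega
    have h₂ : k ≠ k + 1 + 1 := by omega
    simp [linkGen, mulAutArrow_linkVec, Equiv.swap_apply_def, h₁, h₂, mul_comm, mul_left_comm]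
  · ext x
    simp only [linkGen, SemidirectProduct.mul_right, Equiv.Perm.mul_apply, Equiv.swap_apply_def]
    split_ifs <;> omega

namespace Braid

variable {m : ℕ}

lemma sg_of_lt {k : ℕ} (h : k < m) : sg m k = sigma ⟨k, h⟩ := dif_pos h

lemma sg_of_le {k : ℕ} (h : m ≤ k) : sg m k = 1 := dif_neg (by omega)

lemma commute_sigma {i j : Fin m} (h : (i : ℕ) + 2 ≤ j) : Commute (sigma i) (sigma j) := by
  have hrel := PresentedGroup.one_of_mem (show FreeGroup.of i * .of j * (.of i)⁻¹ * (.of j)⁻¹ ∈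
    braidRels m from Or.inl ⟨i, j, h, rfl⟩)
  simp only [map_mul, map_inv] at hrel
  exact mul_inv_eq_iff_eq_mul.1 (mul_inv_eq_one.1 hrel)

lemma sigma_braid {i j : Fin m} (h : (i : ℕ) + 1 = j) :
    sigma i * sigma j * sigma i = sigma j * sigma i * sigma j := by
  have hrel := PresentedGroup.one_of_mem (show FreeGroup.of i * .of j * .of i *
    (.of j * .of i * .of j)⁻¹ ∈ braidRels m from Or.inr ⟨i, j, h, rfl⟩)
  simp only [map_mul, map_inv] at hrel
  exact mul_inv_eq_one.1 hrel

lemma commute_sg {k l : ℕ} (h : k + 2 ≤ l) : Commute (sg m k) (sg m l) := by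
  by_cases hl : l < m
  · rw [sg_of_lt hl, sg_of_lt (by omega)]
    exact commute_sigma h
  · rw [sg_of_le (k := l) (by omega)]
    exact Commute.one_right _

lemma sg_braid {k : ℕ} (h : k + 2 ≤ m) :
    sg m k * sg m (k + 1) * sg m k = sg m (k + 1) * sg m k * sg m (k + 1) := by
  rw [sg_of_lt (by omega), sg_of_lt (by omega)]
  exact sigma_braid rfl

lemma closure_sg_image_Iio : Subgroup.closure (sg m '' Set.Iio m) = ⊤ := by
  rw [← PresentedGroup.closure_range_of (braidRels m)]
  congr 1
  ext g
  constructor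
  · rintro ⟨k, hk, rfl⟩
    exact ⟨⟨k, hk⟩, (sg_of_lt hk).symm⟩
  · rintro ⟨i, rfl⟩
    exact ⟨i, i.isLt, sg_of_lt i.isLt⟩

lemma Ael_succ_self (i : ℕ) : Ael m i (i + 1) = sg m i * sg m i := if_pos rfl

lemma Ael_succ_of_ne {i j : ℕ} (h : j ≠ i) : Ael m i (j + 1) = sg m j * Ael m i j * (sg m j)⁻¹ :=
  if_neg h

lemma Ael_of_le {i j : ℕ} (h : j ≤ i) : Ael m i j = 1 := by
  induction j with
  | zero => rfl
  | succ j ih => rw [Ael_succ_of_ne (by omega), ih (by omega), mul_one, mul_inv_cancel]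

lemma commute_sg_Ael_of_lt {i j k : ℕ} (h : j < k) : Commute (sg m k) (Ael m i j) := by
  induction j with
  | zero => exact Commute.one_right _
  | succ j ih =>
    by_cases hj : j = i
    · subst hj
      rw [Ael_succ_self]
      exact (commute_sg (by omega)).symm.mul_right (commute_sg (by omega)).symm
    · rw [Ael_succ_of_ne hj]
      exact ((commute_sg (by omega)).symm.mul_right (ih (by omega))).mul_right
        (commute_sg (by omega)).symm.inv_right

lemma commute_sg_Ael_of_add_two_le {i j k : ℕ} (h : k + 2 ≤ i) :
    Commute (sg m k) (Ael m i j) := by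
  induction j with
  | zero => exact Commute.one_right _
  | succ j ih =>
    rcases lt_trichotomy j i with hj | rfl | hj
    · rw [Ael_of_le hj]
      exact Commute.one_right _
    · rw [Ael_succ_self]
      exact (commute_sg h).mul_right (commute_sg h)
    · rw [Ael_succ_of_ne hj.ne']
      exact ((commute_sg (by omega)).mul_right ih).mul_right (commute_sg (by omega)).inv_right

lemma commute_sg_Ael_of_lt_of_add_two_le {i j k : ℕ} (h₁ : i < k) (h₂ : k + 2 ≤ j)
    (hj : j ≤ m) : Commute (sg m k) (Ael m i j) := by
  induction j, h₂ using Nat.le_induction with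
  | base =>
    rw [Ael_succ_of_ne (by omega), Ael_succ_of_ne (by omega)]
    exact commute_conj_of_braid (sg_braid hj) (commute_sg_Ael_of_lt (by omega))
  | succ j hkj ih =>
    rw [Ael_succ_of_ne (by omega)]
    exact ((commute_sg hkj).mul_right (ih (by omega))).mul_right (commute_sg hkj).inv_right

lemma sg_conj_Ael {i j : ℕ} (h : i + 2 ≤ j) (hj : j ≤ m) :
    sg m i * Ael m i j * (sg m i)⁻¹ = Ael m (i + 1) j := by
  induction j, h using Nat.le_induction with
  | base =>
    rw [Ael_succ_of_ne (by omega), Ael_succ_self, Ael_succ_self]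
    exact conj_mul_self_of_braid (sg_braid hj)
  | succ j hij ih =>
    rw [Ael_succ_of_ne (by omega), Ael_succ_of_ne (by omega), ← ih (by omega)]
    exact (commute_sg hij).conj_conj_comm _

def closureAel (m : ℕ) : Subgroup (Braid m) :=
  Subgroup.closure {g | ∃ i j, i < j ∧ j ≤ m ∧ g = Ael m i j}

lemma Ael_mem_closureAel {i j : ℕ} (h : i < j) (hj : j ≤ m) : Ael m i j ∈ closureAel m :=
  Subgroup.subset_closure ⟨i, j, h, hj, rfl⟩

lemma sg_mul_self_mem_closureAel {k : ℕ} (hk : k < m) : sg m k * sg m k ∈ closureAel m := by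
  rw [← Ael_succ_self]
  exact Ael_mem_closureAel k.lt_succ_self hk

lemma sg_conj_Ael_mem_closureAel {i j k : ℕ} (hk : k < m) (hij : i < j) (hj : j ≤ m) :
    sg m k * Ael m i j * (sg m k)⁻¹ ∈ closureAel m := by
  have conj_mem {x a : Braid m} (hx : x ∈ closureAel m) (ha : a ∈ closureAel m) :
      x * a * x⁻¹ ∈ closureAel m := mul_mem (mul_mem hx ha) (inv_mem hx)
  have hsq := sg_mul_self_mem_closureAel hk
  have mem {i j : ℕ} (hij : i < j) (hj : j ≤ m) := Ael_mem_closureAel hij hj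
  rcases (by omega : j < k ∨ k = j ∨ (i < k ∧ k + 1 = j) ∨ (i < k ∧ k + 2 ≤ j) ∨
      (k = i ∧ j = i + 1) ∨ (k = i ∧ i + 2 ≤ j) ∨ k + 1 = i ∨ k + 2 ≤ i)
    with h | rfl | ⟨h, rfl⟩ | ⟨h₁, h₂⟩ | ⟨rfl, rfl⟩ | ⟨rfl, h⟩ | rfl | h
  · rw [(commute_sg_Ael_of_lt h).mul_inv_cancel]
    exact mem hij hj
  · rw [← Ael_succ_of_ne hij.ne']
    exact mem (by omega) (by omega)
  · rw [Ael_succ_of_ne (by omega)]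
    convert conj_mem hsq (mem h (by omega)) using 1
    group
  · rw [(commute_sg_Ael_of_lt_of_add_two_le h₁ h₂ hj).mul_inv_cancel]
    exact mem hij hj
  · rw [Ael_succ_self, ((Commute.refl _).mul_right (Commute.refl _)).mul_inv_cancel]
    exact hsq
  · rw [sg_conj_Ael h hj]
    exact mem (by omega) hj
  · rw [← sg_conj_Ael (by omega) hj]
    convert conj_mem hsq (mem (i := k) (by omega) hj) using 1
    group
  · rw [(commute_sg_Ael_of_add_two_le h).mul_inv_cancel]
    exact mem hij hj

/-- Only conjugation by `σ_k` needs checking: conjugation by `σ_k⁻¹` is conjugation by `σ_k`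
followed by conjugation by `σ_k⁻² ∈ closureAel m`. -/
instance closureAel_normal : (closureAel m).Normal := by
  rw [← Subgroup.normalizer_eq_top_iff, eq_top_iff, ← closure_sg_image_Iio, Subgroup.closure_le]
  rintro _ ⟨k, hk, rfl⟩
  have hconj : closureAel m ≤ (closureAel m).comap (MulAut.conj (sg m k)).toMonoidHom := by
    rw [closureAel, Subgroup.closure_le]
    rintro _ ⟨i, j, hij, hj, rfl⟩
    exact sg_conj_Ael_mem_closureAel hk hij hj
  refine Subgroup.mem_normalizer_iff.2 fun g => ⟨fun hg => hconj hg, fun hg => ?_⟩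
  have hsq := sg_mul_self_mem_closureAel hk
  have := mul_mem (mul_mem (inv_mem hsq) (hconj hg)) hsq
  simpa [mul_assoc] using this

section Permutation

variable (perm : Braid m →* Equiv.Perm (Fin (m + 1)))
  (hperm : ∀ i : Fin m, perm (sigma i) = Equiv.swap i.castSucc i.succ)
include hperm

lemma perm_sg {k : ℕ} (hk : k < m) :
    perm (sg m k) = Equiv.swap ⟨k, by omega⟩ ⟨k + 1, by omega⟩ := by
  rw [sg_of_lt hk, hperm]
  rfl

lemma Ael_mem_ker (i j : ℕ) : Ael m i j ∈ perm.ker := by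
  induction j with
  | zero => exact one_mem _
  | succ j ih =>
    rw [MonoidHom.mem_ker] at ih ⊢
    by_cases hj : j = i
    · subst hj
      rw [Ael_succ_self, map_mul]
      by_cases hk : j < m
      · rw [perm_sg perm hperm hk, Equiv.swap_mul_self]
      · rw [sg_of_le (by omega), map_one, mul_one]
    · rw [Ael_succ_of_ne hj, map_mul, map_mul, ih, mul_one, map_inv, mul_inv_cancel]

lemma closureAel_le_ker : closureAel m ≤ perm.ker := by
  rw [closureAel, Subgroup.closure_le]
  rintro _ ⟨i, j, -, -, rfl⟩
  exact Ael_mem_ker perm hperm i j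

theorem ker_eq_closureAel : perm.ker = closureAel m := by
  refine le_antisymm (fun g hg => ?_) (closureAel_le_ker perm hperm)
  let f := QuotientGroup.lift (closureAel m) perm (closureAel_le_ker perm hperm)
  have hf : Function.Injective f := by
    refine injective_of_coxeter_relations (t := QuotientGroup.mk' (closureAel m) ∘ sg m)
      (fun k l h _ => (commute_sg h).map _)
      (fun k h => by simp only [Function.comp_apply, ← map_mul, sg_braid h])
      (fun k hk => ?_) (fun k hk => perm_sg perm hperm hk) ?_
    · rw [Function.comp_apply, ← map_mul, QuotientGroup.mk'_apply, QuotientGroup.eq_one_iff]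
      exact sg_mul_self_mem_closureAel hk
    · rw [Set.image_comp, ← MonoidHom.map_closure, closure_sg_image_Iio, ← MonoidHom.range_eq_map,
        QuotientGroup.range_mk']
  rw [← QuotientGroup.eq_one_iff]
  exact hf (by simpa [f] using hg)

end Permutation

def linkRep (m : ℕ) : Braid m →* LinkGroup :=
  PresentedGroup.toGroup (f := fun i : Fin m => linkGen i) <| by
    rintro _ (⟨i, j, h, rfl⟩ | ⟨i, j, h, rfl⟩) <;>
      simp only [map_mul, map_inv, FreeGroup.lift_apply_of, mul_inv_eq_one]
    · exact mul_inv_eq_iff_eq_mul.2 (commute_linkGen h)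
    · rw [← h]
      exact linkGen_braid i

lemma linkRep_sg {k : ℕ} (hk : k < m) : linkRep m (sg m k) = linkGen k := by
  rw [sg_of_lt hk]
  exact PresentedGroup.toGroup.of _

lemma linkRep_Ael {i j : ℕ} (hij : i < j) (hj : j ≤ m) :
    linkRep m (Ael m i j) = SemidirectProduct.inl (linkVec i j ^ 2) := by
  induction j, hij using Nat.le_induction with
  | base => rw [Ael_succ_self, map_mul, linkRep_sg (by omega), linkGen_mul_self]
  | succ j hij ih =>
    rw [Ael_succ_of_ne (by omega), map_mul, map_mul, map_inv, ih (by omega),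
      linkRep_sg (by omega), SemidirectProduct.mul_inl_mul_inv, map_pow, linkGen,
      mulAutArrow_linkVec, Equiv.swap_apply_of_ne_of_ne (by omega) (by omega),
      Equiv.swap_apply_left]

lemma closureAel_le_ker_linkRep :
    closureAel m ≤ (SemidirectProduct.rightHom.comp (linkRep m)).ker := by
  rw [closureAel, Subgroup.closure_le]
  rintro _ ⟨i, j, hij, hj, rfl⟩
  rw [SetLike.mem_coe, MonoidHom.mem_ker, MonoidHom.comp_apply, linkRep_Ael hij hj,
    SemidirectProduct.rightHom_inl]

section Abelianization

variable (perm : Braid m →* Equiv.Perm (Fin (m + 1)))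
  (hperm : ∀ i : Fin m, perm (sigma i) = Equiv.swap i.castSucc i.succ)

def linkingNumbers : perm.ker →* (ℕ × ℕ → Multiplicative ℤ) where
  toFun g := (linkRep m g).left
  map_one' := by rw [OneMemClass.coe_one, map_one]; rfl
  map_mul' g h := by
    have hg : (linkRep m g).right = 1 :=
      closureAel_le_ker_linkRep (ker_eq_closureAel perm hperm ▸ g.2)
    rw [Subgroup.coe_mul, map_mul, SemidirectProduct.mul_left, hg, map_one, MulAut.one_apply]

def abelBasis (p : {p : Fin (m + 1) × Fin (m + 1) // p.1 < p.2}) :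
    Additive (Abelianization perm.ker) :=
  Additive.ofMul (Abelianization.of ⟨Ael m p.1.1 p.1.2, Ael_mem_ker perm hperm _ _⟩)

def linkingCoord (p : ℕ × ℕ) : Additive (Abelianization perm.ker) →+ ℤ :=
  MonoidHom.toAdditiveLeft
    ((Pi.evalMonoidHom _ p).comp (Abelianization.lift (linkingNumbers perm hperm)))

lemma linkingCoord_abelBasis (p q : {p : Fin (m + 1) × Fin (m + 1) // p.1 < p.2}) :
    linkingCoord perm hperm (p.1.1, p.1.2) (abelBasis perm hperm q) = if q = p then 2 else 0 := by
  obtain ⟨⟨a, b⟩, hab⟩ := p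
  obtain ⟨⟨c, d⟩, hcd⟩ := q
  change Multiplicative.toAdd ((linkRep m (Ael m c d)).left (a, b)) = _
  rw [linkRep_Ael hcd (by omega), SemidirectProduct.left_inl, Pi.pow_apply, toAdd_pow, linkVec,
    toAdd_ofAdd, nsmul_eq_mul]
  simp only [Subtype.mk.injEq, Prod.mk.injEq, Fin.ext_iff, Fin.lt_def] at hab hcd ⊢
  split_ifs <;> omega

theorem injective_lift_abelBasis :
    Function.Injective (FreeAbelianGroup.lift (abelBasis perm hperm)) := by
  refine (injective_iff_map_eq_zero _).2 fun x hx => ?_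
  have hcoeff (p) : (linkingCoord perm hperm (p.1.1, p.1.2)).comp
      (FreeAbelianGroup.lift (abelBasis perm hperm)) = 2 • FreeAbelianGroup.coeff p :=
    FreeAbelianGroup.lift_ext _ _ fun q => by
      simp [linkingCoord_abelBasis, FreeAbelianGroup.coeff, Finsupp.single_apply]
  apply (FreeAbelianGroup.equivFinsupp _).injective
  ext p
  have := congr($(hcoeff p) x)
  simp only [AddMonoidHom.comp_apply, hx, map_zero, AddMonoidHom.smul_apply] at this
  have h0 : FreeAbelianGroup.coeff p x = 0 := by simpa using this.symm
  rw [FreeAbelianGroup.equivFinsupp_apply, map_zero, Finsupp.coe_zero, Pi.zero_apply]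
  exact h0

theorem surjective_lift_abelBasis :
    Function.Surjective (FreeAbelianGroup.lift (abelBasis perm hperm)) := by
  intro x
  obtain ⟨⟨g, hg⟩, rfl⟩ := QuotientGroup.mk_surjective (Additive.toMul x)
  have hg' := ker_eq_closureAel perm hperm ▸ hg
  induction hg' using Subgroup.closure_induction with
  | mem g hA =>
    obtain ⟨i, j, hij, hj, rfl⟩ := hA
    exact ⟨.of ⟨(⟨i, by omega⟩, ⟨j, by omega⟩), hij⟩, FreeAbelianGroup.lift_apply_of _ _⟩
  | one => exact ⟨0, map_zero _⟩
  | mul g h hg' hh' ihg ihh =>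
    have hker := closureAel_le_ker perm hperm
    obtain ⟨u, hu⟩ := ihg (hker hg')
    obtain ⟨v, hv⟩ := ihh (hker hh')
    exact ⟨u + v, by rw [map_add, hu, hv]; rfl⟩
  | inv g hg' ihg =>
    obtain ⟨u, hu⟩ := ihg (closureAel_le_ker perm hperm hg')
    exact ⟨-u, by rw [map_neg, hu]; rfl⟩

end Abelianization

end Braid

theorem stmt18 (n : ℕ) (hn : 2 ≤ n)
    (perm : Braid (n-1) →* Equiv.Perm (Fin n))
    (hperm : ∀ (i : Fin (n-1)) (h1 : (i : ℕ) < n) (h2 : (i : ℕ) + 1 < n),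
      perm (sigma i) = Equiv.swap ⟨i, h1⟩ ⟨(i : ℕ) + 1, h2⟩) :
    ∃ hmem : ∀ i j : Fin n, i < j → Ael (n-1) i j ∈ perm.ker,
      ∃ e : FreeAbelianGroup {p : Fin n × Fin n // p.1 < p.2} ≃+
          Additive (Abelianization ↥perm.ker),
        ∀ p : {p : Fin n × Fin n // p.1 < p.2},
          e (FreeAbelianGroup.of p) =
            Additive.ofMul (Abelianization.of
              (⟨Ael (n-1) p.1.1 p.1.2, hmem p.1.1 p.1.2 p.2⟩ : ↥perm.ker)) := by
  obtain ⟨m, rfl⟩ : ∃ m, n = m + 1 := ⟨n - 1, by omega⟩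
  have hperm' : ∀ i : Fin m, perm (sigma i) = Equiv.swap i.castSucc i.succ :=
    fun i => hperm i _ _
  exact ⟨fun i j _ => Braid.Ael_mem_ker perm hperm' i j,
    AddEquiv.ofBijective _ ⟨Braid.injective_lift_abelBasis perm hperm',
      Braid.surjective_lift_abelBasis perm hperm'⟩,
    fun p => FreeAbelianGroup.lift_apply_of (Braid.abelBasis perm hperm') p⟩
end
end
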